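/- arXiv:1912.10790 — 7 statements merged into one kernel-verified Lean document; each statement's English description precedes it below -/
import Mathlib

section
/- Let m ≥ 1 be an integer, r ≥ 3 an integer, and let a, α be real numbers with α ≠ 0 and a ≥ m α^2 (where a plays the role of |A|^2). If a^2 - m·a - (r-2)·m^2·α^2 = 0, then m < a ≤ m(r-1), and a = m(r-1) holds if and only if a = m α^2. -/
theorem stmt_1 (m r : ℕ) (hm : 1 ≤ m) (hr : 3 ≤ r) (a α : ℝ) (hα : α ≠ 0)
    (ha : a ≥ m * α ^ 2)
    (heq : a ^ 2 - m * a - ((r : ℝ) - 2) * m ^ 2 * α ^ 2 = 0) :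
    ((m : ℝ) < a ∧ a ≤ m * ((r : ℝ) - 1)) ∧
    (a = m * ((r : ℝ) - 1) ↔ a = m * α ^ 2) := by
  have hα2 : (0:ℝ) < α ^ 2 := by positivity
  have hm' : (1:ℝ) ≤ m := by exact_mod_cast hm
  have hr' : (3:ℝ) ≤ r := by exact_mod_cast hr
  have hp : (0:ℝ) < ((r:ℝ) - 2) * m ^ 2 * α ^ 2 := by
    exact mul_pos (mul_pos (by linarith) (by positivity)) hα2
  have hapos : 0 < a := by nlinarith
  have h1 : (m:ℝ) < a := by nlinarith [mul_pos hapos hapos]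
  have h3 : (m:ℝ) * (m * α ^ 2) ≤ m * a := by nlinarith
  have h2 : a ≤ m * ((r:ℝ) - 1) := by nlinarith [mul_pos hapos hapos]
  refine ⟨⟨h1, h2⟩, ?_, ?_⟩
  · intro h
    have hne : ((r:ℝ) - 2) * m ≠ 0 :=
      ne_of_gt (mul_pos (by linarith) (by positivity))
    have : ((r:ℝ) - 2) * m * a = ((r:ℝ) - 2) * m * (m * α ^ 2) := by
      rw [h] at heq ⊢
      linear_combination heq
    exact mul_left_cancel₀ hne this
  · intro h
    have hne : a ≠ 0 := ne_of_gt hapos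
    have : a * a = a * (m * ((r:ℝ) - 1)) := by
      linear_combination heq - ((r:ℝ) - 2) * m * h
    exact mul_left_cancel₀ hne this
end

section
/- Let r ≥ 3 be an integer and α ≠ 0 a real number. Suppose a = (m/2)(1 + √(1 + 4(r-2)α^2)) satisfies a ≥ m α^2 (for some m > 0). Then 0 < α^2 ≤ r - 1, and α^2 = r - 1 if and only if a = m α^2. -/
theorem stmt_2 (r : ℕ) (hr : 3 ≤ r) (α m : ℝ) (hα : α ≠ 0) (hm : 0 < m)
    (a : ℝ) (hadef : a = m / 2 * (1 + Real.sqrt (1 + 4 * ((r : ℝ) - 2) * α ^ 2)))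
    (ha : a ≥ m * α ^ 2) :
    (0 < α ^ 2 ∧ α ^ 2 ≤ (r : ℝ) - 1) ∧ (α ^ 2 = (r : ℝ) - 1 ↔ a = m * α ^ 2) := by
  have hr3 : (3 : ℝ) ≤ (r : ℝ) := by exact_mod_cast hr
  have hA : 0 < α ^ 2 := by positivity
  set s := Real.sqrt (1 + 4 * ((r : ℝ) - 2) * α ^ 2) with hs
  have harg : (0 : ℝ) ≤ 1 + 4 * ((r : ℝ) - 2) * α ^ 2 := by nlinarith
  have hsq : s ^ 2 = 1 + 4 * ((r : ℝ) - 2) * α ^ 2 := Real.sq_sqrt harg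
  have hsnn : 0 ≤ s := Real.sqrt_nonneg _
  have key : 1 + s ≥ 2 * α ^ 2 := by
    have h2 : m / 2 * (1 + s) ≥ m * α ^ 2 := hadef ▸ ha
    nlinarith
  have hle : α ^ 2 ≤ (r : ℝ) - 1 := by
    rcases le_or_gt (2 * α ^ 2) 1 with h | h
    · nlinarith
    · have hs2 : s ^ 2 ≥ (2 * α ^ 2 - 1) ^ 2 := by nlinarith
      nlinarith
  refine ⟨⟨hA, hle⟩, ?_, ?_⟩
  · intro h
    have hc : (0 : ℝ) ≤ 2 * α ^ 2 - 1 := by nlinarith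
    have hseq : s = 2 * α ^ 2 - 1 := by
      rw [hs, show 1 + 4 * ((r : ℝ) - 2) * α ^ 2 = (2 * α ^ 2 - 1) ^ 2 by nlinarith]
      exact Real.sqrt_sq hc
    rw [hadef, hseq]; ring
  · intro h
    have h2 : m * (1 + s) = m * (2 * α ^ 2) := by linear_combination 2 * h - 2 * hadef
    have h1 : 1 + s = 2 * α ^ 2 := mul_left_cancel₀ hm.ne' h2
    nlinarith [hsq, hA]
end

section
/- For all real numbers s with 0 < s < π/3 and sin s ≠ 0, 2cos(2s)+1 ≠ 0, one has the trigonometric identity: (tan(π/6 - s) - tan(s + π/6) + cot s)^2·(2 - r) + (tan^2(π/6 - s) + tan^2(s + π/6) + cot^2 s)^2 - 3(tan^2(π/6 - s) + tan^2(s + π/6) + cot^2 s) = (9/8)·csc^4(s)·(r·cos(12s) - r + 28·cos(6s) + 44)/(2cos(2s)+1)^4 for every real r. -/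
/-!
Since `tan (π / 6 - s) = cot (s + π / 3)` and `-tan (s + π / 6) = cot (s + 2π / 3)`, the three
quantities are the cotangents of `s`, `s + π / 3`, `s + 2π / 3`. Their sum is `3 cot 3s` and the
sum of their squares is `9 cot² 3s + 6`, so both sides are rational functions of `sin 3s` and
`cos 3s`, using `sin 3s = sin s (2 cos 2s + 1)` for the denominator on the right.
-/

open Real

namespace Real

lemma cos_pi_div_six_sub_mul_cos_add_pi_div_six (s : ℝ) :
    cos (π / 6 - s) * cos (s + π / 6) = (2 * cos (2 * s) + 1) / 4 := by
  have h := two_mul_cos_mul_cos (π / 6 - s) (s + π / 6)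
  rw [show π / 6 - s - (s + π / 6) = -(2 * s) by ring,
    show π / 6 - s + (s + π / 6) = π / 3 by ring, cos_neg, cos_pi_div_three] at h
  linarith

lemma sin_pi_div_six_sub_mul_sin_add_pi_div_six (s : ℝ) :
    sin (π / 6 - s) * sin (s + π / 6) = (2 * cos (2 * s) - 1) / 4 := by
  have h := two_mul_sin_mul_sin (π / 6 - s) (s + π / 6)
  rw [show π / 6 - s - (s + π / 6) = -(2 * s) by ring,
    show π / 6 - s + (s + π / 6) = π / 3 by ring, cos_neg, cos_pi_div_three] at h
  linarith

lemma tan_pi_div_six_sub_sub_tan_add_pi_div_six {s : ℝ} (h : 2 * cos (2 * s) + 1 ≠ 0) :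
    tan (π / 6 - s) - tan (s + π / 6) = -4 * sin (2 * s) / (2 * cos (2 * s) + 1) := by
  have hprod := cos_pi_div_six_sub_mul_cos_add_pi_div_six s
  have hcos : cos (π / 6 - s) * cos (s + π / 6) ≠ 0 := by
    rw [hprod]; exact div_ne_zero h four_ne_zero
  rw [tan_eq_sin_div_cos, tan_eq_sin_div_cos,
    div_sub_div _ _ (left_ne_zero_of_mul hcos) (right_ne_zero_of_mul hcos), ← sin_sub, hprod,
    show π / 6 - s - (s + π / 6) = -(2 * s) by ring, sin_neg]
  field_simp

lemma tan_pi_div_six_sub_mul_tan_add_pi_div_six (s : ℝ) :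
    tan (π / 6 - s) * tan (s + π / 6) = (2 * cos (2 * s) - 1) / (2 * cos (2 * s) + 1) := by
  rw [tan_eq_sin_div_cos, tan_eq_sin_div_cos, div_mul_div_comm,
    sin_pi_div_six_sub_mul_sin_add_pi_div_six, cos_pi_div_six_sub_mul_cos_add_pi_div_six,
    div_div_div_cancel_right₀ four_ne_zero]

lemma sin_three_mul_eq_sin_mul (s : ℝ) : sin (3 * s) = sin s * (2 * cos (2 * s) + 1) := by
  rw [sin_three_mul, cos_two_mul, cos_sq']
  ring

lemma cos_three_mul_eq_cos_mul (s : ℝ) : cos (3 * s) = cos s * (2 * cos (2 * s) - 1) := by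
  rw [cos_three_mul, cos_two_mul]
  ring

lemma tan_pi_div_six_sub_sub_tan_add_pi_div_six_add_cot {s : ℝ} (hsin : sin s ≠ 0)
    (hden : 2 * cos (2 * s) + 1 ≠ 0) :
    tan (π / 6 - s) - tan (s + π / 6) + cos s / sin s = 3 * (cos (3 * s) / sin (3 * s)) := by
  rw [tan_pi_div_six_sub_sub_tan_add_pi_div_six hden, sin_three_mul_eq_sin_mul,
    cos_three_mul_eq_cos_mul, sin_two_mul]
  field_simp
  rw [sin_sq_eq_half_sub]
  ring

lemma tan_pi_div_six_sub_sq_add_tan_add_pi_div_six_sq_add_cot_sq {s : ℝ} (hsin : sin s ≠ 0)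
    (hden : 2 * cos (2 * s) + 1 ≠ 0) :
    tan (π / 6 - s) ^ 2 + tan (s + π / 6) ^ 2 + (cos s / sin s) ^ 2
      = 9 * (cos (3 * s) / sin (3 * s)) ^ 2 + 6 := by
  rw [show tan (π / 6 - s) ^ 2 + tan (s + π / 6) ^ 2
      = (tan (π / 6 - s) - tan (s + π / 6)) ^ 2 + 2 * (tan (π / 6 - s) * tan (s + π / 6)) by ring,
    tan_pi_div_six_sub_sub_tan_add_pi_div_six hden, tan_pi_div_six_sub_mul_tan_add_pi_div_six,
    sin_three_mul_eq_sin_mul, cos_three_mul_eq_cos_mul, sin_two_mul]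
  field_simp
  rw [sin_sq_eq_half_sub, cos_sq]
  ring

end Real

theorem stmt_6_general (s : ℝ)
    (hsin : Real.sin s ≠ 0) (hden : 2 * Real.cos (2 * s) + 1 ≠ 0) (r : ℝ) :
    (Real.tan (π / 6 - s) - Real.tan (s + π / 6) + Real.cos s / Real.sin s) ^ 2 * (2 - r)
      + (Real.tan (π / 6 - s) ^ 2 + Real.tan (s + π / 6) ^ 2
          + (Real.cos s / Real.sin s) ^ 2) ^ 2
      - 3 * (Real.tan (π / 6 - s) ^ 2 + Real.tan (s + π / 6) ^ 2
          + (Real.cos s / Real.sin s) ^ 2)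
    = (9 / 8) * (Real.sin s)⁻¹ ^ 4
        * (r * Real.cos (12 * s) - r + 28 * Real.cos (6 * s) + 44)
        / (2 * Real.cos (2 * s) + 1) ^ 4 := by
  have hsin3 : sin (3 * s) ≠ 0 := by
    rw [sin_three_mul_eq_sin_mul]; exact mul_ne_zero hsin hden
  have hcsc : (sin s)⁻¹ ^ 4 / (2 * cos (2 * s) + 1) ^ 4 = (sin (3 * s))⁻¹ ^ 4 := by
    rw [sin_three_mul_eq_sin_mul]; field_simp
  have hcos6 : cos (6 * s) = 1 - 2 * sin (3 * s) ^ 2 := by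
    rw [show 6 * s = 2 * (3 * s) by ring, cos_two_mul, cos_sq']; ring
  have hcos12 : cos (12 * s) = 1 - 8 * sin (3 * s) ^ 2 * cos (3 * s) ^ 2 := by
    rw [show 12 * s = 2 * (2 * (3 * s)) by ring, cos_two_mul, cos_two_mul, cos_sq']; ring
  rw [tan_pi_div_six_sub_sub_tan_add_pi_div_six_add_cot hsin hden,
    tan_pi_div_six_sub_sq_add_tan_add_pi_div_six_sq_add_cot_sq hsin hden,
    mul_div_right_comm, mul_div_assoc, hcsc, hcos6, hcos12]
  field_simp
  rw [cos_sq']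
  ring

theorem stmt_6 (s : ℝ) (hs : s ∈ Set.Ioo 0 (π / 3))
    (hsin : Real.sin s ≠ 0) (hden : 2 * Real.cos (2 * s) + 1 ≠ 0) (r : ℝ) :
    (Real.tan (π / 6 - s) - Real.tan (s + π / 6) + Real.cos s / Real.sin s) ^ 2 * (2 - r)
      + (Real.tan (π / 6 - s) ^ 2 + Real.tan (s + π / 6) ^ 2
          + (Real.cos s / Real.sin s) ^ 2) ^ 2
      - 3 * (Real.tan (π / 6 - s) ^ 2 + Real.tan (s + π / 6) ^ 2
          + (Real.cos s / Real.sin s) ^ 2)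
    = (9 / 8) * (Real.sin s)⁻¹ ^ 4
        * (r * Real.cos (12 * s) - r + 28 * Real.cos (6 * s) + 44)
        / (2 * Real.cos (2 * s) + 1) ^ 4 :=
  stmt_6_general s hsin hden r
end

section
/- Let P_{b,r}(y) = y^4(b^2 r + 2br + r) + y^3(-3b^2 r - 4b^2 - 4br - r + 4) + y^2(3b^2 r + 12b^2 + 2br - 2b) + y(-b^2 r - 12b^2 + 2b) + 4b^2, viewed as a function of b. For all b ≥ 0, 0 < y < 1 and 0 < r ≤ 4, the derivative ∂P_{b,r}/∂b = 2(1-y)^3(4 - ry)b + 2y(1-y)(1 + yr(1-y)) is strictly positive. -/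
/-! Collecting powers of `b`, `P` is the quadratic
`(1 - y)³ (4 - r y) b² + 2 y (1 - y) (1 + y r (1 - y)) b + y³ (4 - r (1 - y))`;
for `0 < y < 1` and `0 ≤ r ≤ 4` its leading coefficient is nonnegative and its linear one
positive, so its derivative is positive for `b ≥ 0`. -/

noncomputable def P (b r y : ℝ) : ℝ :=
  y ^ 4 * (b ^ 2 * r + 2 * b * r + r)
    + y ^ 3 * (-3 * b ^ 2 * r - 4 * b ^ 2 - 4 * b * r - r + 4)
    + y ^ 2 * (3 * b ^ 2 * r + 12 * b ^ 2 + 2 * b * r - 2 * b)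
    + y * (-(b ^ 2) * r - 12 * b ^ 2 + 2 * b) + 4 * b ^ 2

theorem hasDerivAt_quadratic (a c d x : ℝ) :
    HasDerivAt (fun t : ℝ => a * t ^ 2 + c * t + d) (2 * a * x + c) x := by
  have h : HasDerivAt (fun t : ℝ => a * t ^ 2 + c * t + d) (a * (2 * x) + c * 1) x := by
    simpa using (((hasDerivAt_pow 2 x).const_mul a).add ((hasDerivAt_id x).const_mul c)).add_const d
  exact h.congr_deriv (by ring)

theorem P_eq_quadratic (b r y : ℝ) :
    P b r y = (1 - y) ^ 3 * (4 - r * y) * b ^ 2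
      + 2 * y * (1 - y) * (1 + y * r * (1 - y)) * b + y ^ 3 * (4 - r * (1 - y)) := by
  unfold P
  ring

theorem hasDerivAt_P (b r y : ℝ) :
    HasDerivAt (fun t : ℝ => P t r y)
      (2 * (1 - y) ^ 3 * (4 - r * y) * b + 2 * y * (1 - y) * (1 + y * r * (1 - y))) b := by
  simp only [P_eq_quadratic]
  convert hasDerivAt_quadratic ((1 - y) ^ 3 * (4 - r * y)) _ _ b using 2
  ring

theorem deriv_P_pos {b r y : ℝ} (hb : 0 ≤ b) (hy : 0 < y) (hy1 : y < 1)
    (hr : 0 ≤ r) (hr4 : r ≤ 4) :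
    0 < 2 * (1 - y) ^ 3 * (4 - r * y) * b + 2 * y * (1 - y) * (1 + y * r * (1 - y)) := by
  have hy1' : 0 < 1 - y := sub_pos.mpr hy1
  have hry : 0 < 4 - r * y := by nlinarith
  have hlead : 0 ≤ 2 * (1 - y) ^ 3 * (4 - r * y) * b := by positivity
  have hlin : 0 < 2 * y * (1 - y) * (1 + y * r * (1 - y)) := by positivity
  linarith

theorem stmt_8 (b r y : ℝ) (hb : 0 ≤ b) (hy : 0 < y) (hy1 : y < 1)
    (hr : 0 < r) (hr4 : r ≤ 4) :
    HasDerivAt (fun t : ℝ => P t r y)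
      (2 * (1 - y) ^ 3 * (4 - r * y) * b + 2 * y * (1 - y) * (1 + y * r * (1 - y))) b ∧
    0 < 2 * (1 - y) ^ 3 * (4 - r * y) * b + 2 * y * (1 - y) * (1 + y * r * (1 - y)) :=
  ⟨hasDerivAt_P b r y, deriv_P_pos hb hy hy1 hr.le hr4⟩
end

section
/- Let P_{b,r}(y) = y^4(b^2 r + 2br + r) + y^3(-3b^2 r - 4b^2 - 4br - r + 4) + y^2(3b^2 r + 12b^2 + 2br - 2b) + y(-b^2 r - 12b^2 + 2b) + 4b^2. For every b > 0, every y ∈ (0,1), and every real r with 0 < r ≤ 4, one has P_{b,r}(y) > 0. -/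
theorem stmt_9 (b r y : ℝ) (hb : 0 < b) (hy : y ∈ Set.Ioo (0 : ℝ) 1)
    (hr : 0 < r) (hr4 : r ≤ 4) : 0 < P b r y := by
  obtain ⟨hy0, hy1⟩ := hy
  have key : P b r y = b ^ 2 * ((1 - y) ^ 3 * (4 - r * y))
      + 2 * b * (y * (1 - y) * (r * y * (1 - y) + 1))
      + y ^ 3 * (r * y + (4 - r)) := by
    unfold P; ring
  rw [key]
  have h1 : 0 < 1 - y := by linarith
  have h2 : 0 < 4 - r * y := by nlinarith
  have h3 : 0 < r * y + (4 - r) := by nlinarith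
  positivity
end

section
/- Let m ≥ 2 and let k_1, k_2, k_3 be smooth real-valued functions on a connected smooth manifold M that are pairwise distinct at every point. Suppose there are positive integers m_1, m_2, m_3 and constants C_1, C_2 such that m_1k_1 + m_2k_2 + m_3k_3 = C_1 and m_1k_1^2 + m_2k_2^2 + m_3k_3^2 = C_2 on M. If for every point and every tangent vector X in the i-th distribution X(k_i)=0, and at each point the tangent space is spanned by the three distributions, then each k_i is constant on M. (Linear algebra core: if m_2(X k_2) + m_3(X k_3) = 0 and m_2 k_2(X k_2) + m_3 k_3(X k_3) = 0 with k_2 ≠ k_3 and m_2, m_3 > 0, then X k_2 = X k_3 = 0.) -/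
/-!
Differentiating the two constraints along a tangent vector `v` gives
`∑ mᵢ (v kᵢ) = 0` and `∑ mᵢ kᵢ (v kᵢ) = 0`. If `v` lies in the `j`-th distribution then
`v kⱼ = 0`, and the remaining two unknowns satisfy a `2 × 2` system with determinant
`mₗ mₚ (kₚ - kₗ) ≠ 0`, so `v kᵢ = 0` for all `i`. Since the distributions span the tangent space,
every `dkᵢ` vanishes, hence each `kᵢ` is locally constant, and constant as `M` is connected.
-/

open Manifold

lemma eq_zero_of_moments_eq_zero {m₁ m₂ k₁ k₂ a₁ a₂ : ℝ} (hm₁ : m₁ ≠ 0) (hm₂ : m₂ ≠ 0)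
    (hk : k₁ ≠ k₂) (h₀ : m₁ * a₁ + m₂ * a₂ = 0) (h₁ : m₁ * k₁ * a₁ + m₂ * k₂ * a₂ = 0) :
    a₁ = 0 ∧ a₂ = 0 := by
  have ha₁ : m₁ * (k₁ - k₂) * a₁ = 0 := by linear_combination h₁ - k₂ * h₀
  have ha₂ : m₂ * (k₂ - k₁) * a₂ = 0 := by linear_combination h₁ - k₁ * h₀
  simp only [mul_eq_zero, hm₁, hm₂, sub_eq_zero, hk, hk.symm, false_or] at ha₁ ha₂
  exact ⟨ha₁, ha₂⟩

lemma eq_zero_of_moments_eq_zero_fin_three {m k a : Fin 3 → ℝ} (hm : ∀ i, m i ≠ 0)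
    (hk : Function.Injective k) (h₀ : ∑ i, m i * a i = 0) (h₁ : ∑ i, m i * k i * a i = 0)
    {j : Fin 3} (hj : a j = 0) : a = 0 := by
  simp only [Fin.sum_univ_three] at h₀ h₁
  funext i
  fin_cases j <;> simp only [Fin.zero_eta, Fin.mk_one, Fin.reduceFinMk] at hj <;>
    simp only [hj, mul_zero, zero_add, add_zero] at h₀ h₁
  · obtain ⟨_, _⟩ := eq_zero_of_moments_eq_zero (hm 1) (hm 2) (hk.ne (by decide)) h₀ h₁
    fin_cases i <;> simpa
  · obtain ⟨_, _⟩ := eq_zero_of_moments_eq_zero (hm 0) (hm 2) (hk.ne (by decide)) h₀ h₁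
    fin_cases i <;> simpa
  · obtain ⟨_, _⟩ := eq_zero_of_moments_eq_zero (hm 0) (hm 1) (hk.ne (by decide)) h₀ h₁
    fin_cases i <;> simpa

theorem ContinuousLinearMap.eq_zero_of_iSup_eq_top {V : Type*} [TopologicalSpace V]
    [AddCommGroup V] [Module ℝ V] {ι : Type*} {D : ι → Submodule ℝ V} (hD : ⨆ i, D i = ⊤)
    {L : V →L[ℝ] ℝ} (hL : ∀ i, ∀ v ∈ D i, L v = 0) : L = 0 := by
  have hker : ⨆ i, D i ≤ LinearMap.ker (L : V →ₗ[ℝ] ℝ) := iSup_le fun i v hv => hL i v hv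
  rw [hD, top_le_iff, LinearMap.ker_eq_top] at hker
  exact ContinuousLinearMap.coe_injective hker

section

variable {E : Type*} [NormedAddCommGroup E] [NormedSpace ℝ E] {H : Type*} [TopologicalSpace H]
  {I : ModelWithCorners ℝ E H} {M : Type*} [TopologicalSpace M] [ChartedSpace H M] {x : M}

theorem HasMFDerivAt.sq {f : M → ℝ} {f' : TangentSpace I x →L[ℝ] ℝ}
    (hf : HasMFDerivAt I 𝓘(ℝ) f x f') :
    HasMFDerivAt I 𝓘(ℝ) (fun y => f y ^ 2) x ((2 * f x) • f') := by
  have h := hf.mul hf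
  rw [← add_smul, ← two_mul] at h
  rwa [show (fun y => f y ^ 2) = f * f from funext fun y => _root_.sq (f y)]

theorem HasMFDerivAt.sum_smul_eq_zero_of_sum_mul_eq_const {ι : Type} {s : Finset ι}
    {f : ι → M → ℝ} {f' : ι → TangentSpace I x →L[ℝ] ℝ}
    (hf : ∀ i ∈ s, HasMFDerivAt I 𝓘(ℝ) (f i) x (f' i)) (c : ι → ℝ) {C : ℝ}
    (hC : ∀ y, ∑ i ∈ s, c i * f i y = C) : ∑ i ∈ s, c i • f' i = 0 := by
  have hsum := HasMFDerivAt.sum fun i hi => (hf i hi).const_smul (c i)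
  have hconst : ∑ i ∈ s, c i • f i = fun _ => C := by
    funext y
    simp [hC]
  rw [hconst] at hsum
  exact hsum.mfderiv.symm.trans (mfderiv_const ..)

theorem mfderiv_eq_zero_of_moments_eq_const {k : Fin 3 → M → ℝ}
    (hk : ∀ i, MDifferentiableAt I 𝓘(ℝ) (k i) x) (hdist : Function.Injective fun i => k i x)
    {m : Fin 3 → ℝ} (hm : ∀ i, m i ≠ 0) {C₁ C₂ : ℝ} (hC₁ : ∀ y, ∑ i, m i * k i y = C₁)
    (hC₂ : ∀ y, ∑ i, m i * k i y ^ 2 = C₂) {D : Fin 3 → Submodule ℝ (TangentSpace I x)}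
    (hspan : ⨆ i, D i = ⊤) (hD : ∀ i, ∀ v ∈ D i, mfderiv I 𝓘(ℝ) (k i) x v = 0) (i : Fin 3) :
    mfderiv I 𝓘(ℝ) (k i) x = 0 := by
  set L : Fin 3 → TangentSpace I x →L[ℝ] ℝ := fun j => mfderiv I 𝓘(ℝ) (k j) x
  have h₀ : ∑ j, m j • L j = 0 :=
    HasMFDerivAt.sum_smul_eq_zero_of_sum_mul_eq_const (fun j _ => (hk j).hasMFDerivAt) m hC₁
  have h₁ : ∑ j, m j • (2 * k j x) • L j = 0 :=
    HasMFDerivAt.sum_smul_eq_zero_of_sum_mul_eq_const (fun j _ => (hk j).hasMFDerivAt.sq) m hC₂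
  refine ContinuousLinearMap.eq_zero_of_iSup_eq_top hspan fun j v hv => ?_
  have h₀v := DFunLike.congr_fun h₀ v
  have h₁v := DFunLike.congr_fun h₁ v
  simp only [sum_apply, smul_apply, smul_eq_mul, zero_apply] at h₀v h₁v
  have h₁v' : ∑ j, m j * k j x * L j v = 0 :=
    calc ∑ j, m j * k j x * L j v = 2⁻¹ * ∑ j, m j * (2 * k j x * L j v) := by
          rw [Finset.mul_sum]
          exact Finset.sum_congr rfl fun j _ => by ring
      _ = 0 := by rw [h₁v, mul_zero]
  exact congrFun (eq_zero_of_moments_eq_zero_fin_three hm hdist h₀v h₁v' (hD j v hv)) i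

variable [I.Boundaryless] [IsManifold I 1 M] {F : Type*} [NormedAddCommGroup F] [NormedSpace ℝ F]

theorem isLocallyConstant_of_mfderiv_eq_zero {f : M → F} (hf : MDifferentiable I 𝓘(ℝ, F) f)
    (h : ∀ x, mfderiv I 𝓘(ℝ, F) f x = 0) : IsLocallyConstant f := by
  refine fun t => isOpen_iff_forall_mem_open.2 fun x hx => ?_
  set e := extChartAt I x
  have hchart : ∀ w ∈ e.target, HasFDerivAt (f ∘ e.symm) (0 : E →L[ℝ] F) w := by
    intro w hw
    have he : MDifferentiableAt 𝓘(ℝ, E) I e.symm w :=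
      (mdifferentiableOn_extChartAt_symm w hw).mdifferentiableAt
        ((isOpen_extChartAt_target x).mem_nhds hw)
    have hg := (hf (e.symm w)).comp w he
    rw [mdifferentiableAt_iff_differentiableAt] at hg
    have h0 : fderiv ℝ (f ∘ e.symm) w = 0 := by
      rw [← mfderiv_eq_fderiv, mfderiv_comp w (hf _) he, h]
      rfl
    exact h0 ▸ hg.hasFDerivAt
  have hopen := (isOpen_extChartAt_target x).isOpen_inter_preimage_of_fderiv_eq_zero
    (fun w hw => (hchart w hw).differentiableAt.differentiableWithinAt)
    (fun w hw => (hchart w hw).fderiv) t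
  refine ⟨e.source ∩ e ⁻¹' (e.target ∩ (f ∘ e.symm) ⁻¹' t), ?_,
    isOpen_extChartAt_preimage' x hopen, ?_⟩
  · rintro y ⟨hy, -, hyt⟩
    simpa [e.left_inv hy] using hyt
  · have hxs : x ∈ e.source := mem_extChartAt_source x
    exact ⟨hxs, e.map_source hxs, by simpa [e.left_inv hxs] using hx⟩

end

theorem stmt_13_general {n : ℕ} {M : Type*} [TopologicalSpace M]
    [ChartedSpace (EuclideanSpace ℝ (Fin n)) M] [IsManifold (𝓡 n) (⊤ : ℕ∞) M]
    [ConnectedSpace M]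
    (k : Fin 3 → M → ℝ) (hk : ∀ i, ContMDiff (𝓡 n) 𝓘(ℝ) (⊤ : ℕ∞) (k i))
    (hdist : ∀ x : M, ∀ i j : Fin 3, i ≠ j → k i x ≠ k j x)
    (mult : Fin 3 → ℕ) (hmult : ∀ i, 0 < mult i) (C₁ C₂ : ℝ)
    (hC₁ : ∀ x : M, ∑ i, (mult i : ℝ) * k i x = C₁)
    (hC₂ : ∀ x : M, ∑ i, (mult i : ℝ) * (k i x) ^ 2 = C₂)
    (D : Fin 3 → (x : M) → Submodule ℝ (TangentSpace (𝓡 n) x))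
    (hspan : ∀ x : M, (⨆ i, D i x) = ⊤)
    (hD : ∀ (i : Fin 3) (x : M), ∀ v ∈ D i x, mfderiv (𝓡 n) 𝓘(ℝ) (k i) x v = 0) :
    ∀ i : Fin 3, ∃ c : ℝ, ∀ x : M, k i x = c := by
  have hmd : ∀ j, MDifferentiable (𝓡 n) 𝓘(ℝ) (k j) := fun j => (hk j).mdifferentiable (by simp)
  have hm : ∀ j, (mult j : ℝ) ≠ 0 := fun j => Nat.cast_ne_zero.2 (hmult j).ne'
  intro i
  have hderiv : ∀ x, mfderiv (𝓡 n) 𝓘(ℝ) (k i) x = 0 := fun x =>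
    mfderiv_eq_zero_of_moments_eq_const (fun j => hmd j x)
      (fun j l h => by_contra fun hne => hdist x j l hne h) hm hC₁ hC₂ (hspan x) (hD · x) i
  obtain ⟨c, hc⟩ := (isLocallyConstant_of_mfderiv_eq_zero (hmd i) hderiv).exists_eq_const
  exact ⟨c, congrFun hc⟩

theorem stmt_13 {n : ℕ} (hn : 2 ≤ n) {M : Type*} [TopologicalSpace M]
    [ChartedSpace (EuclideanSpace ℝ (Fin n)) M] [IsManifold (𝓡 n) (⊤ : ℕ∞) M]
    [ConnectedSpace M]
    (k : Fin 3 → M → ℝ) (hk : ∀ i, ContMDiff (𝓡 n) 𝓘(ℝ) (⊤ : ℕ∞) (k i))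
    (hdist : ∀ x : M, ∀ i j : Fin 3, i ≠ j → k i x ≠ k j x)
    (mult : Fin 3 → ℕ) (hmult : ∀ i, 0 < mult i) (C₁ C₂ : ℝ)
    (hC₁ : ∀ x : M, ∑ i, (mult i : ℝ) * k i x = C₁)
    (hC₂ : ∀ x : M, ∑ i, (mult i : ℝ) * (k i x) ^ 2 = C₂)
    (D : Fin 3 → (x : M) → Submodule ℝ (TangentSpace (𝓡 n) x))
    (hspan : ∀ x : M, (⨆ i, D i x) = ⊤)
    (hD : ∀ (i : Fin 3) (x : M), ∀ v ∈ D i x, mfderiv (𝓡 n) 𝓘(ℝ) (k i) x v = 0) :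
    ∀ i : Fin 3, ∃ c : ℝ, ∀ x : M, k i x = c :=
  stmt_13_general k hk hdist mult hmult C₁ C₂ hC₁ hC₂ D hspan hD
end

section
/- For all real s with sin(4s) ≠ 0 and all real r, m_1, the identity (2-r)·4·m_1^2·(cot(2s) - tan(2s))^2 + (m_1(tan^2 s + cot^2 s) + m_1(tan^2(s+π/4) + cot^2(s+π/4)))^2 - 4m_1·(m_1(tan^2 s + cot^2 s + tan^2(s+π/4) + cot^2(s+π/4))) = 2m_1^2·csc^4(4s)·(r·cos(16s) - r + 40·cos(8s) + 88) holds. -/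
open Real

lemma key (a b r m : ℝ) (ha : a ≠ 0) (hb : b ≠ 0) (hab : a^2 + b^2 = 1) :
    (2 - r)*4*m^2*(b/a - a/b)^2
      + (m*((2 + 2*b^2)/a^2) + m*((2 + 2*a^2)/b^2))^2
      - 4*m*(m*((2 + 2*b^2)/a^2 + (2 + 2*a^2)/b^2))
    = 2*m^2*((2*a*b)⁻¹)^4
        * (r*(2*(2*(b^2 - a^2)^2 - 1)^2 - 1) - r + 40*(2*(b^2 - a^2)^2 - 1) + 88) := by
  field_simp
  rw [show b^2 = 1 - a^2 by linarith]
  ring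

lemma aux (x : ℝ) (h1 : Real.sin x ≠ 0) (h2 : Real.cos x ≠ 0) :
    Real.tan x ^ 2 + (Real.cos x / Real.sin x) ^ 2
      = (2 + 2*(Real.cos x ^ 2 - Real.sin x ^ 2)^2) / (2*Real.sin x*Real.cos x)^2 := by
  rw [Real.tan_eq_sin_div_cos]
  field_simp
  linear_combination (Real.sin x^2 + Real.cos x^2 + 1)
    * Real.sin_sq_add_cos_sq x

theorem stmt_16 (s r m₁ : ℝ) (hs : Real.sin (4 * s) ≠ 0) :
    (2 - r) * 4 * m₁ ^ 2
        * (Real.cos (2 * s) / Real.sin (2 * s) - Real.tan (2 * s)) ^ 2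
      + (m₁ * (Real.tan s ^ 2 + (Real.cos s / Real.sin s) ^ 2)
          + m₁ * (Real.tan (s + π / 4) ^ 2
              + (Real.cos (s + π / 4) / Real.sin (s + π / 4)) ^ 2)) ^ 2
      - 4 * m₁ * (m₁ * (Real.tan s ^ 2 + (Real.cos s / Real.sin s) ^ 2
          + Real.tan (s + π / 4) ^ 2
          + (Real.cos (s + π / 4) / Real.sin (s + π / 4)) ^ 2))
    = 2 * m₁ ^ 2 * (Real.sin (4 * s))⁻¹ ^ 4
        * (r * Real.cos (16 * s) - r + 40 * Real.cos (8 * s) + 88) := by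
  have h4 : Real.sin (4 * s) = 2 * Real.sin (2 * s) * Real.cos (2 * s) := by
    rw [show (4:ℝ) * s = 2 * (2 * s) by ring, Real.sin_two_mul]
  rw [h4] at hs
  have ha : Real.sin (2 * s) ≠ 0 := fun h => hs (by rw [h]; ring)
  have hb : Real.cos (2 * s) ≠ 0 := fun h => hs (by rw [h]; ring)
  have h2 : Real.sin (2 * s) = 2 * Real.sin s * Real.cos s := Real.sin_two_mul s
  have hss : Real.sin s ≠ 0 := fun h => ha (by rw [h2, h]; ring)
  have hcs : Real.cos s ≠ 0 := fun h => ha (by rw [h2, h]; ring)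
  have hq : 2 * Real.sin (s + π / 4) * Real.cos (s + π / 4) = Real.cos (2 * s) := by
    rw [← Real.sin_two_mul, show 2 * (s + π / 4) = 2 * s + π / 2 by ring,
      Real.sin_add_pi_div_two]
  have hsp : Real.sin (s + π / 4) ≠ 0 := fun h => hb (by rw [← hq, h]; ring)
  have hcp : Real.cos (s + π / 4) ≠ 0 := fun h => hb (by rw [← hq, h]; ring)
  have hq2 : Real.cos (s + π / 4) ^ 2 - Real.sin (s + π / 4) ^ 2 = -Real.sin (2 * s) := by
    rw [← Real.cos_two_mul', show 2 * (s + π / 4) = 2 * s + π / 2 by ring,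
      Real.cos_add_pi_div_two]
  have h2c : Real.cos s ^ 2 - Real.sin s ^ 2 = Real.cos (2 * s) := (Real.cos_two_mul' s).symm
  have e1 : Real.tan s ^ 2 + (Real.cos s / Real.sin s) ^ 2
      = (2 + 2 * Real.cos (2 * s) ^ 2) / Real.sin (2 * s) ^ 2 := by
    rw [aux s hss hcs, h2c, ← h2]
  have e2 : Real.tan (s + π / 4) ^ 2 + (Real.cos (s + π / 4) / Real.sin (s + π / 4)) ^ 2
      = (2 + 2 * Real.sin (2 * s) ^ 2) / Real.cos (2 * s) ^ 2 := by
    rw [aux (s + π / 4) hsp hcp, hq2, hq]; ring_nf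
  have h16 : Real.cos (16 * s)
      = 2 * (2 * (Real.cos (2 * s) ^ 2 - Real.sin (2 * s) ^ 2) ^ 2 - 1) ^ 2 - 1 := by
    rw [show (16:ℝ) * s = 2 * (8 * s) by ring, Real.cos_two_mul,
      show (8:ℝ) * s = 2 * (4 * s) by ring, Real.cos_two_mul,
      show (4:ℝ) * s = 2 * (2 * s) by ring, Real.cos_two_mul']
  have h8 : Real.cos (8 * s)
      = 2 * (Real.cos (2 * s) ^ 2 - Real.sin (2 * s) ^ 2) ^ 2 - 1 := by
    rw [show (8:ℝ) * s = 2 * (4 * s) by ring, Real.cos_two_mul,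
      show (4:ℝ) * s = 2 * (2 * s) by ring, Real.cos_two_mul']
  rw [h16, h8, h4, Real.tan_eq_sin_div_cos (2 * s),
    show Real.tan s ^ 2 + (Real.cos s / Real.sin s) ^ 2 + Real.tan (s + π / 4) ^ 2
        + (Real.cos (s + π / 4) / Real.sin (s + π / 4)) ^ 2
      = (Real.tan s ^ 2 + (Real.cos s / Real.sin s) ^ 2)
        + (Real.tan (s + π / 4) ^ 2
          + (Real.cos (s + π / 4) / Real.sin (s + π / 4)) ^ 2) by ring,
    e1, e2]
  exact key _ _ r m₁ ha hb (Real.sin_sq_add_cos_sq (2 * s))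
end
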